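/- Let $m \ge 2$ be an integer, $d$ a real number, and $z_1 < z_2$ positive real numbers, both satisfying $(2m^2 - d)z^2 - 2mz + 1 = 0$. Suppose $N_1, N_2$ are positive integers with $N_1 + N_2 = m$ and $N_1 z_1 + N_2 z_2 = 1$. Then $N_1 > N_2$, $d = (N_1 - N_2)^2 + m^2$, $z_1 = \frac{1}{2N_1}$ and $z_2 = \frac{1}{2N_2}$. -/

import Mathlib

/-!
By Vieta, `1/z₁ + 1/z₂ = 2m = 2N₁ + 2N₂`. Substituting `N₁z₁ = 1 - N₂z₂` into this relation
gives `(2N₂z₂ - 1)(m z₂ - 1) = 0`, and `m z₂ = 1` would force `z₁ = z₂`. Hence `N₁z₁ = N₂z₂ = 1/2`,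
and the product of the roots, `z₁z₂ = 1/(2m² - d)`, determines `d`.
-/

theorem quadratic_vieta_of_ne {K : Type*} [Field K] {a b c x y : K}
    (hx : a * x ^ 2 - b * x + c = 0) (hy : a * y ^ 2 - b * y + c = 0) (hxy : x ≠ y) :
    a * (x + y) = b ∧ a * (x * y) = c := by
  have hsum : a * (x + y) = b := by
    have h : (x - y) * (a * (x + y) - b) = 0 := by linear_combination hx - hy
    exact sub_eq_zero.mp ((mul_eq_zero.mp h).resolve_left (sub_ne_zero.mpr hxy))
  exact ⟨hsum, by linear_combination x * hsum - hx⟩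

theorem two_mul_mul_eq_one_of_add_eq_mul {K : Type*} [Field K] {p q x y : K} (hxy : x ≠ y)
    (hrec : x + y = 2 * (p + q) * (x * y)) (hsum : p * x + q * y = 1) :
    2 * p * x = 1 ∧ 2 * q * y = 1 := by
  have hfactor : (2 * q * y - 1) * ((p + q) * y - 1) = 0 := by
    linear_combination p * hrec - (1 - 2 * (p + q) * y) * hsum
  rcases mul_eq_zero.mp hfactor with hy | hy
  · exact ⟨by linear_combination 2 * hsum - hy, by linear_combination hy⟩
  · exact absurd (show x = y by linear_combination -hrec - 2 * x * hy) hxy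

theorem lt_of_two_mul_mul_eq_one {K : Type*} [Field K] [LinearOrder K] [IsStrictOrderedRing K]
    {p q x y : K} (hp : 0 ≤ p) (hq : 0 ≤ q) (hx : 2 * p * x = 1) (hy : 2 * q * y = 1)
    (hxy : x < y) : q < p := by
  have hp' : 0 < 2 * p := lt_of_le_of_ne (by positivity) (left_ne_zero_of_mul_eq_one hx).symm
  have hq' : 0 < 2 * q := lt_of_le_of_ne (by positivity) (left_ne_zero_of_mul_eq_one hy).symm
  rw [eq_one_div_of_mul_eq_one_right hx, eq_one_div_of_mul_eq_one_right hy,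
    one_div_lt_one_div hp' hq'] at hxy
  linarith

theorem roots_multiplicities (m : ℕ) (d z1 z2 : ℝ) (hlt : z1 < z2)
    (heq1 : (2 * (m : ℝ) ^ 2 - d) * z1 ^ 2 - 2 * (m : ℝ) * z1 + 1 = 0)
    (heq2 : (2 * (m : ℝ) ^ 2 - d) * z2 ^ 2 - 2 * (m : ℝ) * z2 + 1 = 0)
    (N1 N2 : ℕ) (hNsum : N1 + N2 = m)
    (hsum : (N1 : ℝ) * z1 + (N2 : ℝ) * z2 = 1) :
    N2 < N1 ∧ d = ((N1 : ℝ) - (N2 : ℝ)) ^ 2 + (m : ℝ) ^ 2 ∧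
      z1 = 1 / (2 * (N1 : ℝ)) ∧ z2 = 1 / (2 * (N2 : ℝ)) := by
  subst hNsum
  push_cast at heq1 heq2 ⊢
  obtain ⟨hroot_sum, hroot_prod⟩ := quadratic_vieta_of_ne heq1 heq2 hlt.ne
  have hrec : z1 + z2 = 2 * ((N1 : ℝ) + N2) * (z1 * z2) := by
    linear_combination z1 * z2 * hroot_sum - (z1 + z2) * hroot_prod
  obtain ⟨hz1, hz2⟩ := two_mul_mul_eq_one_of_add_eq_mul hlt.ne hrec hsum
  have hlead : 2 * ((N1 : ℝ) + N2) ^ 2 - d = 4 * N1 * N2 := by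
    linear_combination 4 * (N1 : ℝ) * N2 * hroot_prod
      - 2 * (N2 : ℝ) * z2 * (2 * ((N1 : ℝ) + N2) ^ 2 - d) * hz1
      - (2 * ((N1 : ℝ) + N2) ^ 2 - d) * hz2
  refine ⟨?_, by linear_combination -hlead, eq_one_div_of_mul_eq_one_right hz1,
    eq_one_div_of_mul_eq_one_right hz2⟩
  exact_mod_cast lt_of_two_mul_mul_eq_one (Nat.cast_nonneg N1) (Nat.cast_nonneg N2) hz1 hz2 hlt
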